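/- arXiv:1909.11365 — 5 statements merged into one kernel-verified Lean document; each statement's English description precedes it below -/
import Mathlib

section
/- Consider scheduling n independent tasks with processing times p_1,...,p_n on m identical machines. Any list schedule (a schedule in which no machine is idle while an unscheduled task remains) has makespan at most W/m + p_max, where W is the sum of all processing times and p_max is the maximum processing time. Consequently, any list schedule has makespan at most 2 times the optimal makespan. -/
/-- A non-preemptive schedule of tasks (indexed by `ι`, with processing
times `p`) on `m` identical machines. -/
structure MSched (ι : Type) (m : ℕ) (p : ι → ℝ) where
  machine : ι → Fin m
  start : ι → ℝ
  hstart : ∀ j, 0 ≤ start j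
  disj : ∀ i j : ι, i ≠ j → machine i = machine j →
    start i + p i ≤ start j ∨ start j + p j ≤ start i

/-- Completion time of task `j`. -/
def MSched.finish {ι : Type} {m : ℕ} {p : ι → ℝ} (S : MSched ι m p) (j : ι) : ℝ :=
  S.start j + p j

/-- Machine `q` is busy at time `t`. -/
def MSched.busyAt {ι : Type} {m : ℕ} {p : ι → ℝ} (S : MSched ι m p)
    (q : Fin m) (t : ℝ) : Prop :=
  ∃ j, S.machine j = q ∧ S.start j ≤ t ∧ t < S.finish j

/-- Makespan: maximum completion time. -/
noncomputable def MSched.makespan {ι : Type} [Fintype ι] {m : ℕ} {p : ι → ℝ}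
    (hne : Nonempty ι) (S : MSched ι m p) : ℝ :=
  Finset.univ.sup' (Finset.univ_nonempty_iff.mpr hne) S.finish

/-- List schedule: no machine is idle while an unstarted task remains. -/
def MSched.isList {ι : Type} {m : ℕ} {p : ι → ℝ} (S : MSched ι m p) : Prop :=
  ∀ t : ℝ, 0 ≤ t → (∃ q : Fin m, ¬ S.busyAt q t) → ∀ j, S.start j ≤ t

/-!
Let `j` be a task finishing last. While `j` has not started, no machine is idle, so on every
machine the tasks assigned to it cover `[0, start j)` and `start j` is at most that machine's
load. Averaging over the `m` machines gives `start j ≤ W / m`, hence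
`C = start j + p j ≤ W / m + pmax ≤ 2 C*`.
-/

open MeasureTheory

theorem Real.sub_le_sum_of_Ico_subset_biUnion {ι : Type*} {s : Finset ι} {a b : ℝ}
    {c d : ι → ℝ} (hcd : ∀ i ∈ s, c i ≤ d i)
    (hcover : Set.Ico a b ⊆ ⋃ i ∈ s, Set.Ico (c i) (d i)) :
    b - a ≤ ∑ i ∈ s, (d i - c i) := by
  have hvol : volume (Set.Ico a b) ≤ ∑ i ∈ s, volume (Set.Ico (c i) (d i)) :=
    (measure_mono hcover).trans (measure_biUnion_finset_le s _)
  have hlen : ∀ i ∈ s, 0 ≤ d i - c i := fun i hi => sub_nonneg.2 (hcd i hi)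
  simp only [Real.volume_Ico] at hvol
  rw [← ENNReal.ofReal_sum_of_nonneg hlen] at hvol
  exact (ENNReal.ofReal_le_ofReal_iff (Finset.sum_nonneg hlen)).1 hvol

namespace MSched

variable {ι : Type} {m : ℕ} {p : ι → ℝ} (S : MSched ι m p)

theorem busyAt_of_lt_start (hlist : S.isList) {t : ℝ} (ht : 0 ≤ t) {j : ι} (htj : t < S.start j)
    (q : Fin m) : S.busyAt q t := by
  by_contra hidle
  exact (hlist t ht ⟨q, hidle⟩ j).not_gt htj

theorem start_le_sum_filter_machine [Fintype ι] (hlist : S.isList) (hp : ∀ j, 0 ≤ p j) (j : ι)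
    (q : Fin m) : S.start j ≤ ∑ i with S.machine i = q, p i := by
  have hcover : Set.Ico 0 (S.start j) ⊆
      ⋃ i ∈ ({i | S.machine i = q} : Finset ι), Set.Ico (S.start i) (S.finish i) := by
    rintro t ⟨ht0, htj⟩
    obtain ⟨i, hiq, hit, hti⟩ := S.busyAt_of_lt_start hlist ht0 htj q
    exact Set.mem_biUnion (Finset.mem_filter.2 ⟨Finset.mem_univ i, hiq⟩) ⟨hit, hti⟩
  simpa [finish] using
    Real.sub_le_sum_of_Ico_subset_biUnion (fun i _ => le_add_of_nonneg_right (hp i)) hcover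

theorem card_mul_start_le_sum [Fintype ι] (hlist : S.isList) (hp : ∀ j, 0 ≤ p j) (j : ι) :
    m * S.start j ≤ ∑ i, p i :=
  calc (m : ℝ) * S.start j = ∑ _q : Fin m, S.start j := by simp
    _ ≤ ∑ q : Fin m, ∑ i with S.machine i = q, p i :=
      Finset.sum_le_sum fun q _ => S.start_le_sum_filter_machine hlist hp j q
    _ = ∑ i, p i := Finset.sum_fiberwise _ _ _

theorem exists_makespan_eq_finish [Fintype ι] (hne : Nonempty ι) :
    ∃ j, S.makespan hne = S.finish j := by
  obtain ⟨j, -, hj⟩ := Finset.exists_mem_eq_sup' (Finset.univ_nonempty_iff.2 hne) S.finish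
  exact ⟨j, hj⟩

theorem makespan_le_sum_div_add [Fintype ι] (hne : Nonempty ι) (hm : 0 < m) (hlist : S.isList)
    (hp : ∀ j, 0 ≤ p j) {pmax : ℝ} (hpmax : ∀ j, p j ≤ pmax) :
    S.makespan hne ≤ (∑ i, p i) / m + pmax := by
  obtain ⟨j, hj⟩ := S.exists_makespan_eq_finish hne
  have hstart : S.start j ≤ (∑ i, p i) / m := by
    rw [le_div_iff₀ (Nat.cast_pos.2 hm), mul_comm]
    exact S.card_mul_start_le_sum hlist hp j
  rw [hj, finish]
  exact add_le_add hstart (hpmax j)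

end MSched

theorem list_scheduling_two_approx_general
    (n m : ℕ) (hn : 0 < n) (hm : 0 < m)
    (p : Fin n → ℝ) (hp : ∀ j, 0 < p j)
    (S : MSched (Fin n) m p) (hlist : S.isList)
    (W pmax Copt : ℝ)
    (hW : W = ∑ j, p j)
    (hpmax1 : ∀ j, p j ≤ pmax)
    (hopt1 : W / m ≤ Copt) (hopt2 : pmax ≤ Copt) :
    S.makespan ⟨⟨0, hn⟩⟩ ≤ W / m + pmax ∧ S.makespan ⟨⟨0, hn⟩⟩ ≤ 2 * Copt := by
  have hbound : S.makespan ⟨⟨0, hn⟩⟩ ≤ W / m + pmax :=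
    hW ▸ S.makespan_le_sum_div_add _ hm hlist (fun j => (hp j).le) hpmax1
  exact ⟨hbound, by linarith⟩

/-- Graham's bound for list scheduling of independent tasks on
`m` identical machines: any list schedule has makespan at most `W/m + pmax`,
hence at most twice the optimal makespan `Copt`
(which satisfies `Copt ≥ W/m` and `Copt ≥ pmax`). -/
theorem list_scheduling_two_approx
    (n m : ℕ) (hn : 0 < n) (hm : 0 < m)
    (p : Fin n → ℝ) (hp : ∀ j, 0 < p j)
    (S : MSched (Fin n) m p) (hlist : S.isList)
    (W pmax Copt : ℝ)
    (hW : W = ∑ j, p j)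
    (hpmax1 : ∀ j, p j ≤ pmax) (hpmax2 : ∃ j, p j = pmax)
    (hopt1 : W / m ≤ Copt) (hopt2 : pmax ≤ Copt) :
    S.makespan ⟨⟨0, hn⟩⟩ ≤ W / m + pmax ∧ S.makespan ⟨⟨0, hn⟩⟩ ≤ 2 * Copt :=
  list_scheduling_two_approx_general n m hn hm p hp S hlist W pmax Copt hW hpmax1 hopt1 hopt2
end

section
/- For scheduling independent tasks on m identical machines, any list schedule has makespan at most (2 - 1/m) times the optimal makespan. -/
/-- any list schedule of independent tasks on `m` identical
machines has makespan at most `(2 - 1/m)` times the optimal makespan. -/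
theorem list_scheduling_refined_approx
    (n m : ℕ) (hn : 0 < n) (hm : 0 < m)
    (p : Fin n → ℝ) (hp : ∀ j, 0 < p j)
    (S : MSched (Fin n) m p) (hlist : S.isList)
    (Copt : ℝ)
    (hopt1 : (∑ j, p j) / m ≤ Copt) (hopt2 : ∀ j, p j ≤ Copt) :
    S.makespan ⟨⟨0, hn⟩⟩ ≤ (2 - 1 / m) * Copt := by
  classical
  obtain ⟨l, -, hl⟩ := Finset.exists_mem_eq_sup'
    (Finset.univ_nonempty_iff.mpr (⟨⟨0, hn⟩⟩ : Nonempty (Fin n))) S.finish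
  rw [MSched.makespan, hl]
  set s := S.start l with hs
  have hbusy : ∀ t, 0 ≤ t → t < s → ∀ q, S.busyAt q t := by
    intro t ht hts q
    by_contra h
    exact absurd (hlist t ht ⟨q, h⟩ l) (not_le.mpr hts)
  have hkey : ∀ q : Fin m,
      s ≤ ∑ j ∈ Finset.univ.filter (fun j => S.machine j = q ∧ j ≠ l), p j := by
    intro q
    set T := Finset.univ.filter (fun j => S.machine j = q ∧ j ≠ l) with hT
    have hcov : Set.Ico (0:ℝ) s ⊆ ⋃ j ∈ T, Set.Ico (S.start j) (S.finish j) := by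
      intro t ⟨ht0, hts⟩
      obtain ⟨j, hjq, hj1, hj2⟩ := hbusy t ht0 hts q
      have hjl : j ≠ l := by rintro rfl; exact absurd hj1 (not_le.mpr hts)
      exact Set.mem_biUnion (Finset.mem_filter.mpr ⟨Finset.mem_univ j, hjq, hjl⟩) ⟨hj1, hj2⟩
    have h1 := (MeasureTheory.measure_mono (μ := MeasureTheory.volume) hcov).trans
      (MeasureTheory.measure_biUnion_finset_le (μ := MeasureTheory.volume) T
        (fun j => Set.Ico (S.start j) (S.finish j)))
    simp only [Real.volume_Ico, MSched.finish, add_sub_cancel_left, sub_zero] at h1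
    rw [← ENNReal.ofReal_sum_of_nonneg (fun j _ => (hp j).le)] at h1
    have hnn : 0 ≤ ∑ j ∈ T, p j := Finset.sum_nonneg fun j _ => (hp j).le
    exact (ENNReal.ofReal_le_ofReal_iff hnn).mp h1
  have hpart : ∑ q : Fin m,
      ∑ j ∈ Finset.univ.filter (fun j => S.machine j = q ∧ j ≠ l), p j
      = ∑ j ∈ Finset.univ.erase l, p j := by
    have : ∀ q : Fin m, Finset.univ.filter (fun j => S.machine j = q ∧ j ≠ l)
        = (Finset.univ.erase l).filter (fun j => S.machine j = q) := by
      intro q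
      ext j
      simp [Finset.mem_filter, Finset.mem_erase, and_comm]
    simp_rw [this]
    exact Finset.sum_fiberwise (Finset.univ.erase l) S.machine p
  have hsum : (m : ℝ) * s ≤ (∑ j, p j) - p l := by
    have h1 : (m : ℝ) * s ≤ ∑ q : Fin m,
        ∑ j ∈ Finset.univ.filter (fun j => S.machine j = q ∧ j ≠ l), p j := by
      calc (m : ℝ) * s = ∑ _q : Fin m, s := by simp [mul_comm]
      _ ≤ _ := Finset.sum_le_sum fun q _ => hkey q
    rw [hpart, Finset.sum_erase_eq_sub (Finset.mem_univ l)] at h1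
    exact h1
  have hmR : (1:ℝ) ≤ (m:ℝ) := by exact_mod_cast hm
  have hmpos : (0:ℝ) < m := by exact_mod_cast hm
  have hsumC : (∑ j, p j) ≤ m * Copt := by
    rw [div_le_iff₀ hmpos] at hopt1; linarith [hopt1]
  have hplC := hopt2 l
  have hpl := hp l
  show s + p l ≤ (2 - 1/m) * Copt
  have hC : 0 < Copt := lt_of_lt_of_le hpl hplC
  have key : (m:ℝ) * (s + p l) ≤ 2*m*Copt - Copt := by nlinarith
  have hexp : ((2:ℝ) - 1/m) * Copt = (2*m*Copt - Copt)/m := by field_simp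
  rw [hexp, le_div_iff₀ hmpos]
  nlinarith [key]
end

section
/- In a list schedule for a precedence-constrained task graph on m identical machines, there exists a chain of tasks in the DAG whose execution intervals cover (in time) all intervals during which some machine is idle. Consequently the total idle time satisfies S_idle <= (m-1)·|CP| where |CP| is the length of the longest chain (critical path). -/
open MeasureTheory Set
open scoped Finset

theorem MeasureTheory.integrable_indicator_one {α : Type*} [MeasurableSpace α]
    {μ : Measure α} {s : Set α} (hs : MeasurableSet s) (hμs : μ s ≠ ⊤) :
    Integrable (s.indicator (1 : α → ℝ)) μ :=
  (integrableOn_const hμs).integrable_indicator hs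

namespace MSched

variable {ι : Type} {m : ℕ} {p : ι → ℝ} (S : MSched ι m p)

def interval (j : ι) : Set ℝ := Ico (S.start j) (S.finish j)

def HasIdleMachine (t : ℝ) : Prop := ∃ q : Fin m, ¬ S.busyAt q t

-- has not finished.
def IsListSchedule (prec : ι → ι → Prop) : Prop :=
  ∀ t : ℝ, 0 ≤ t → ∀ j, (∀ i, prec i j → S.finish i ≤ t) → S.HasIdleMachine t →
    S.start j ≤ t

theorem measureReal_interval (hp : ∀ j, 0 ≤ p j) (j : ι) :
    volume.real (S.interval j) = p j := by
  simp [interval, finish, hp j]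

theorem measurableSet_interval (j : ι) : MeasurableSet (S.interval j) := measurableSet_Ico

theorem integrable_indicator_interval (j : ι) :
    Integrable ((S.interval j).indicator (1 : ℝ → ℝ)) :=
  integrable_indicator_one (S.measurableSet_interval j) measure_Ico_lt_top.ne

theorem measureReal_biUnion_interval_le (hp : ∀ j, 0 ≤ p j) (l : List ι) :
    volume.real (⋃ j ∈ l, S.interval j) ≤ (l.map p).sum := by
  induction l with
  | nil => simp
  | cons j l ih =>
    simp only [List.mem_cons, iUnion_iUnion_eq_or_left, List.map_cons, List.sum_cons]
    exact (measureReal_union_le _ _).trans (by rw [S.measureReal_interval hp]; linarith)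

section Chain

variable [Finite ι] {prec : ι → ι → Prop}

theorem exists_prec_forall_idle_lt_finish (hlist : S.IsListSchedule prec) {j : ι} {t₀ : ℝ}
    (ht₀ : t₀ ∈ Ico 0 (S.start j)) (hidle₀ : S.HasIdleMachine t₀) :
    ∃ i, prec i j ∧ ∀ t ∈ Ico 0 (S.start j), S.HasIdleMachine t → t < S.finish i := by
  obtain ⟨i, hi⟩ : ∃ i, prec i j := by
    by_contra! h
    exact (hlist t₀ ht₀.1 j (fun i hi => absurd hi (h i)) hidle₀).not_gt ht₀.2
  obtain ⟨i, hij, hmax⟩ := exists_max_image {i | prec i j} S.finish (toFinite _) ⟨i, hi⟩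
  refine ⟨i, hij, fun t ht hidle => ?_⟩
  by_contra! hle
  exact (hlist t ht.1 j (fun k hk => (hmax k hk).trans hle) hidle).not_gt ht.2

theorem exists_chain_covering_idle (hp : ∀ j, 0 < p j)
    (hprec : ∀ i j, prec i j → S.finish i ≤ S.start j) (hlist : S.IsListSchedule prec) (j : ι) :
    ∃ l : List ι, l.IsChain prec ∧ l.getLast? = some j ∧
      ∀ t ∈ Ico 0 (S.finish j), S.HasIdleMachine t → ∃ i ∈ l, t ∈ S.interval i := by
  induction j using (Finite.wellFounded_of_trans_of_irrefl (InvImage (· < ·) S.start)).induction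
    with | _ j ih => ?_
  by_cases h : ∃ t ∈ Ico 0 (S.start j), S.HasIdleMachine t
  · obtain ⟨t₀, ht₀, hidle₀⟩ := h
    obtain ⟨i, hij, hcover⟩ := S.exists_prec_forall_idle_lt_finish hlist ht₀ hidle₀
    have hstart : S.start i < S.start j :=
      (lt_add_of_pos_right _ (hp i)).trans_le (hprec i j hij)
    obtain ⟨l, hl, hlast, hlcov⟩ := ih i hstart
    refine ⟨l ++ [j], hl.append (List.isChain_singleton j) (by simpa [hlast]), by simp,
      fun t ht hidle => ?_⟩
    rcases lt_or_ge t (S.start j) with htj | htj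
    · obtain ⟨k, hk, htk⟩ := hlcov t ⟨ht.1, hcover t ⟨ht.1, htj⟩ hidle⟩ hidle
      exact ⟨k, List.mem_append_left _ hk, htk⟩
    · exact ⟨j, by simp, htj, ht.2⟩
  · refine ⟨[j], List.isChain_singleton j, rfl,
      fun t ht hidle => ⟨j, List.mem_singleton_self j, ?_, ht.2⟩⟩
    by_contra! htj
    exact h ⟨t, ⟨ht.1, htj⟩, hidle⟩

end Chain

section Load

variable [Fintype ι]

noncomputable def load (t : ℝ) : ℝ := ∑ j, (S.interval j).indicator 1 t

theorem le_load_of_not_hasIdleMachine {t : ℝ} (h : ¬ S.HasIdleMachine t) : (m : ℝ) ≤ S.load t := by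
  classical
  have hsurj :
      SurjOn S.machine ({j | t ∈ S.interval j} : Finset ι) (Finset.univ : Finset (Fin m)) := by
    intro q _
    obtain ⟨j, hjq, hj⟩ := not_not.mp (not_exists.mp h q)
    exact ⟨j, by simpa [interval] using hj, hjq⟩
  calc (m : ℝ) = #(Finset.univ : Finset (Fin m)) := by simp
    _ ≤ #{j | t ∈ S.interval j} := by exact_mod_cast Finset.card_le_card_of_surjOn _ hsurj
    _ = S.load t := by simp [load, indicator_apply, Finset.sum_boole]

theorem indicator_biUnion_le_load (l : List ι) (t : ℝ) :
    (⋃ j ∈ l, S.interval j).indicator 1 t ≤ S.load t := by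
  by_cases ht : t ∈ ⋃ j ∈ l, S.interval j
  · obtain ⟨j, -, hj⟩ := mem_iUnion₂.mp ht
    rw [indicator_of_mem ht]
    simpa [load, indicator_of_mem hj] using
      Finset.single_le_sum (fun k _ => indicator_nonneg (fun _ _ => zero_le_one) t)
        (Finset.mem_univ j) (f := fun k => (S.interval k).indicator (1 : ℝ → ℝ) t)
  · rw [indicator_of_notMem ht]
    exact Finset.sum_nonneg fun k _ => indicator_nonneg (fun _ _ => zero_le_one) t

theorem integrable_load : Integrable S.load :=
  integrable_finsetSum _ fun j _ => S.integrable_indicator_interval j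

theorem integral_load (hp : ∀ j, 0 ≤ p j) : ∫ t, S.load t = ∑ j, p j := by
  simp only [load]
  rw [integral_finsetSum _ fun j _ => S.integrable_indicator_interval j]
  exact Finset.sum_congr rfl fun j _ => by
    rw [integral_indicator_one (S.measurableSet_interval j), S.measureReal_interval hp]

theorem mul_indicator_Ico_le_load_add {C : ℝ} {l : List ι}
    (hcov : ∀ t ∈ Ico 0 C, S.HasIdleMachine t → ∃ j ∈ l, t ∈ S.interval j) (t : ℝ) :
    (m : ℝ) * (Ico 0 C).indicator 1 t ≤
      S.load t + (m - 1) * (⋃ j ∈ l, S.interval j).indicator 1 t := by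
  have hU := S.indicator_biUnion_le_load l t
  by_cases ht : t ∈ Ico 0 C
  · rw [indicator_of_mem ht]
    by_cases htU : t ∈ ⋃ j ∈ l, S.interval j
    · rw [indicator_of_mem htU] at hU ⊢
      simp only [Pi.one_apply] at hU ⊢
      linarith
    · have hbusy :=
        S.le_load_of_not_hasIdleMachine fun hidle => htU (by simpa using hcov t ht hidle)
      rw [indicator_of_notMem htU]
      simpa using hbusy
  · have : 0 ≤ (m : ℝ) * (⋃ j ∈ l, S.interval j).indicator 1 t :=
      mul_nonneg m.cast_nonneg (indicator_nonneg (fun _ _ => zero_le_one) t)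
    rw [indicator_of_notMem ht]
    linarith

theorem mul_sub_sum_le_of_idle_covered (hp : ∀ j, 0 ≤ p j) (hm : 0 < m) {C : ℝ} (hC : 0 ≤ C)
    {l : List ι} (hcov : ∀ t ∈ Ico 0 C, S.HasIdleMachine t → ∃ j ∈ l, t ∈ S.interval j) :
    m * C - ∑ j, p j ≤ (m - 1) * (l.map p).sum := by
  set U := ⋃ j ∈ l, S.interval j
  have hUmeas : MeasurableSet U :=
    .biUnion l.finite_toSet.countable fun j _ => S.measurableSet_interval j
  have hUint : Integrable (U.indicator (1 : ℝ → ℝ)) :=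
    integrable_indicator_one hUmeas
      (measure_biUnion_lt_top l.finite_toSet fun _ _ => measure_Ico_lt_top).ne
  have hint : ∫ t, (m : ℝ) * (Ico 0 C).indicator 1 t ≤
      ∫ t, (S.load t + (m - 1) * U.indicator 1 t) := integral_mono
    ((integrable_indicator_one measurableSet_Ico measure_Ico_lt_top.ne).const_mul (m : ℝ))
    (S.integrable_load.add (hUint.const_mul ((m : ℝ) - 1))) (S.mul_indicator_Ico_le_load_add hcov)
  rw [integral_const_mul, integral_indicator_one measurableSet_Ico, Real.volume_real_Ico,
    integral_add S.integrable_load (hUint.const_mul _), integral_const_mul, S.integral_load hp,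
    integral_indicator_one hUmeas] at hint
  have hm₁ : (0 : ℝ) ≤ m - 1 := sub_nonneg.mpr (Nat.one_le_cast.mpr hm)
  have hUlen := mul_le_mul_of_nonneg_left (S.measureReal_biUnion_interval_le hp l) hm₁
  simp only [sub_zero, max_eq_left hC] at hint
  linarith

end Load

end MSched

theorem list_scheduling_idle_covered_by_chain_general
    (n m : ℕ) (hn : 0 < n)
    (p : Fin n → ℝ) (hp : ∀ j, 0 < p j)
    (prec : Fin n → Fin n → Prop)
    (S : MSched (Fin n) m p)
    (hprec : ∀ i j, prec i j → S.finish i ≤ S.start j)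
    (hlist : ∀ t : ℝ, 0 ≤ t → ∀ j : Fin n,
      (∀ i, prec i j → S.finish i ≤ t) → (∃ q : Fin m, ¬ S.busyAt q t) →
      S.start j ≤ t)
    (Cmax : ℝ) (hC : Cmax = S.makespan ⟨⟨0, hn⟩⟩)
    (Sidle : ℝ) (hS : Sidle = m * Cmax - ∑ j, p j)
    (CP : ℝ) (hCP : ∀ l : List (Fin n), l.Chain' prec → (l.map p).sum ≤ CP) :
    (∃ l : List (Fin n), l.Chain' prec ∧
      ∀ t : ℝ, 0 ≤ t → t < Cmax → (∃ q : Fin m, ¬ S.busyAt q t) →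
        ∃ j ∈ l, S.start j ≤ t ∧ t < S.finish j) ∧
    Sidle ≤ ((m : ℝ) - 1) * CP := by
  have hm : 0 < m := (S.machine ⟨0, hn⟩).pos
  obtain ⟨jlast, -, hjlast⟩ :=
    Finset.exists_mem_eq_sup' (Finset.univ_nonempty_iff.mpr ⟨⟨0, hn⟩⟩) S.finish
  have hCmax : Cmax = S.finish jlast := hC.trans hjlast
  obtain ⟨l, hchain, -, hcov⟩ := S.exists_chain_covering_idle hp hprec hlist jlast
  rw [← hCmax] at hcov
  refine ⟨⟨l, hchain, fun t ht₀ htC hidle => hcov t ⟨ht₀, htC⟩ hidle⟩, ?_⟩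
  have hC₀ : 0 ≤ Cmax := hCmax ▸ add_nonneg (S.hstart jlast) (hp jlast).le
  calc Sidle ≤ ((m : ℝ) - 1) * (l.map p).sum :=
        hS ▸ S.mul_sub_sum_le_of_idle_covered (fun j => (hp j).le) hm hC₀ hcov
    _ ≤ ((m : ℝ) - 1) * CP :=
        mul_le_mul_of_nonneg_left (hCP l hchain) (sub_nonneg.mpr (Nat.one_le_cast.mpr hm))

/-- in a list schedule of a precedence-constrained task graph on
`m` identical machines, there is a chain of the DAG whose execution intervals
cover all times at which some machine is idle; consequently the total idle
time `Sidle = m·Cmax - W` satisfies `Sidle ≤ (m-1)·CP`, where `CP` bounds the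
length of every chain (critical path). -/
theorem list_scheduling_idle_covered_by_chain
    (n m : ℕ) (hn : 0 < n) (hm : 0 < m)
    (p : Fin n → ℝ) (hp : ∀ j, 0 < p j)
    (prec : Fin n → Fin n → Prop)
    (S : MSched (Fin n) m p)
    (hprec : ∀ i j, prec i j → S.finish i ≤ S.start j)
    (hlist : ∀ t : ℝ, 0 ≤ t → ∀ j : Fin n,
      (∀ i, prec i j → S.finish i ≤ t) → (∃ q : Fin m, ¬ S.busyAt q t) →
      S.start j ≤ t)
    (Cmax : ℝ) (hC : Cmax = S.makespan ⟨⟨0, hn⟩⟩)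
    (Sidle : ℝ) (hS : Sidle = m * Cmax - ∑ j, p j)
    (CP : ℝ) (hCP : ∀ l : List (Fin n), l.Chain' prec → (l.map p).sum ≤ CP) :
    (∃ l : List (Fin n), l.Chain' prec ∧
      ∀ t : ℝ, 0 ≤ t → t < Cmax → (∃ q : Fin m, ¬ S.busyAt q t) →
        ∃ j ∈ l, S.start j ≤ t ∧ t < S.finish j) ∧
    Sidle ≤ ((m : ℝ) - 1) * CP :=
  list_scheduling_idle_covered_by_chain_general n m hn p hp prec S hprec hlist Cmax hC Sidle hS CP
    hCP
end

section
/- No on-line algorithm for scheduling independent tasks on one CPU and one GPU has competitive ratio smaller than 2: for any deterministic on-line scheduler, an adversary presenting at most two tasks forces makespan at least 2 while the optimal off-line makespan is 1. -/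
/-- The makespan of an assignment `a` of two tasks (with CPU/GPU times given
by `p`) on one CPU and one GPU: tasks assigned to the same resource serialize
(`a j = true` means task `j` runs on the CPU). -/
noncomputable def mk2 (p : Fin 2 → ℝ × ℝ) (a : Fin 2 → Bool) : ℝ :=
  max (∑ j, if a j then (p j).1 else 0) (∑ j, if a j then 0 else (p j).2)

/-!
The adversary's first task takes time 1 on either resource, so an on-line scheduler must commit
it to some resource `b` before seeing the second task. The second task then takes time 1 on `b`
and 2 on the other resource: running it on `b` serializes the two tasks (makespan 2), running it
elsewhere costs 2 by itself, while the off-line schedule that swaps the two resources has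
makespan 1.
-/

lemma min_le_mk2 {p : Fin 2 → ℝ × ℝ} (hp : ∀ j, 0 ≤ (p j).1 ∧ 0 ≤ (p j).2)
    (a : Fin 2 → Bool) (j : Fin 2) : min (p j).1 (p j).2 ≤ mk2 p a := by
  unfold mk2
  cases h : a j
  · calc min (p j).1 (p j).2 ≤ (p j).2 := min_le_right _ _
      _ = if a j then 0 else (p j).2 := by rw [h]; rfl
      _ ≤ ∑ i, if a i then 0 else (p i).2 :=
        Finset.single_le_sum (f := fun i => if a i then 0 else (p i).2)
          (fun i _ => by split_ifs <;> simp [hp i]) (Finset.mem_univ j)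
      _ ≤ _ := le_max_right _ _
  · calc min (p j).1 (p j).2 ≤ (p j).1 := min_le_left _ _
      _ = if a j then (p j).1 else 0 := by rw [h]; rfl
      _ ≤ ∑ i, if a i then (p i).1 else 0 :=
        Finset.single_le_sum (f := fun i => if a i then (p i).1 else 0)
          (fun i _ => by split_ifs <;> simp [hp i]) (Finset.mem_univ j)
      _ ≤ _ := le_max_left _ _

/-- The adversary's instance once the first task has been placed on resource `b`
(`true` being the CPU, as in `mk2`). -/
def adversary (b : Bool) : Fin 2 → ℝ × ℝ :=
  ![(1, 1), if b then (1, 2) else (2, 1)]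

lemma one_le_mk2_adversary (b : Bool) (a : Fin 2 → Bool) : 1 ≤ mk2 (adversary b) a := by
  have hp : ∀ j, 0 ≤ (adversary b j).1 ∧ 0 ≤ (adversary b j).2 := by
    intro j; fin_cases j <;> cases b <;> norm_num [adversary]
  refine le_trans ?_ (min_le_mk2 hp a 1)
  cases b <;> norm_num [adversary]

lemma mk2_adversary_swap (b : Bool) : mk2 (adversary b) ![!b, b] = 1 := by
  cases b <;> norm_num [mk2, adversary, Fin.sum_univ_two]

lemma two_le_mk2_adversary {b : Bool} {a : Fin 2 → Bool} (ha : a 0 = b) :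
    2 ≤ mk2 (adversary b) a := by
  cases b <;> cases h : a 1 <;> norm_num [mk2, adversary, Fin.sum_univ_two, ha, h]

/-- no deterministic on-line algorithm for two independent tasks
on one CPU and one GPU has competitive ratio below 2.  For any on-line
scheduler `alg` (whose decision on the first task does not depend on the
second task), the adversary produces an instance whose first task has times
`(1,1)`, with optimal makespan `1`, on which `alg` has makespan at least `2`. -/
theorem online_independent_lower_bound_two
    (alg : (Fin 2 → ℝ × ℝ) → (Fin 2 → Bool))
    (honline : ∀ p q : Fin 2 → ℝ × ℝ, p 0 = q 0 → alg p 0 = alg q 0) :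
    ∃ p : Fin 2 → ℝ × ℝ, p 0 = (1, 1) ∧
      (∀ a : Fin 2 → Bool, 1 ≤ mk2 p a) ∧
      (∃ a : Fin 2 → Bool, mk2 p a = 1) ∧
      2 ≤ mk2 p (alg p) := by
  set b := alg (adversary true) 0
  have hfirst : alg (adversary b) 0 = b := honline _ _ rfl
  exact ⟨adversary b, rfl, one_le_mk2_adversary b, ⟨_, mk2_adversary_swap b⟩,
    two_le_mk2_adversary hfirst⟩
end

section
/- The on-line Post Greedy (Earliest Completion Time) algorithm for independent tasks on m CPUs and k GPUs (k <= m) has competitive ratio at least floor(m/k): for every ε > 0 there is an arrival sequence of floor(m/k) rounds, each with k tasks of times (CPU: 1+ε, GPU: 1) followed by m tasks of times (CPU: 1, GPU: ε), on which PG achieves makespan floor(m/k) while the optimal makespan is at most 1 + floor(m/k)·ε·(m/k) (tending to 1 as ε → 0), so the ratio tends to floor(m/k). -/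
/-- A run of the on-line Post Greedy (Earliest Completion Time) algorithm on
`m` CPUs and `k` GPUs: `st i` records the machine loads after the first `i`
tasks have been assigned; each arriving task is put on a machine where it
finishes earliest (a least-loaded machine of the chosen type, whose finish
time is at most the finish time on every machine of the other type). -/
def IsPGRun (m k N : ℕ) (tasks : Fin N → ℝ × ℝ)
    (st : Fin (N + 1) → (Fin m → ℝ) × (Fin k → ℝ)) : Prop :=
  st 0 = (fun _ => 0, fun _ => 0) ∧
  ∀ t : Fin N,
    (∃ i : Fin m,
      (∀ i' : Fin m, (st t.castSucc).1 i ≤ (st t.castSucc).1 i') ∧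
      (∀ g : Fin k, (st t.castSucc).1 i + (tasks t).1 ≤
        (st t.castSucc).2 g + (tasks t).2) ∧
      st t.succ = (Function.update (st t.castSucc).1 i
        ((st t.castSucc).1 i + (tasks t).1), (st t.castSucc).2)) ∨
    (∃ g : Fin k,
      (∀ g' : Fin k, (st t.castSucc).2 g ≤ (st t.castSucc).2 g') ∧
      (∀ i : Fin m, (st t.castSucc).2 g + (tasks t).2 ≤
        (st t.castSucc).1 i + (tasks t).1) ∧
      st t.succ = ((st t.castSucc).1, Function.update (st t.castSucc).2 g
        ((st t.castSucc).2 g + (tasks t).2)))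

/-- The adversarial arrival sequence: `⌊m/k⌋` rounds, each consisting of `k`
tasks with times `(CPU: 1+ε, GPU: 1)` followed by `m` tasks with times
`(CPU: 1, GPU: ε)`. -/
noncomputable def pgTasks (m k : ℕ) (ε : ℝ) (t : Fin (m / k * (k + m))) :
    ℝ × ℝ :=
  if t.val % (k + m) < k then (1 + ε, 1) else (1, ε)

lemma sum_le_of {α : Type*} (s : Finset α) (f : α → ℝ) (c : ℝ)
    (hc : 0 ≤ c) (h : ∀ a ∈ s, f a = c) (n : ℕ) (hcard : s.card ≤ n) :
    ∑ a ∈ s, f a ≤ n * c := by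
  rw [Finset.sum_congr rfl h, Finset.sum_const, nsmul_eq_mul]
  exact mul_le_mul_of_nonneg_right (by exact_mod_cast hcard) hc

lemma rep_eq {c r p r' p' : ℕ} (hp : p < c) (hp' : p' < c)
    (h : r * c + p = r' * c + p') : r = r' ∧ p = p' := by
  have hc : 0 < c := by omega
  have h1 : (r * c + p) / c = r := by
    rw [mul_comm, Nat.mul_add_div hc, Nat.div_eq_of_lt hp, add_zero]
  have h2 : (r' * c + p') / c = r' := by
    rw [mul_comm, Nat.mul_add_div hc, Nat.div_eq_of_lt hp', add_zero]
  have hr : r = r' := by rw [← h1, ← h2, h]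
  subst hr
  omega

def PgInv (m k r p : ℕ) (s : (Fin m → ℝ) × (Fin k → ℝ)) : Prop :=
  (∀ i, s.1 i = (r : ℝ) ∨ s.1 i = (r : ℝ) + 1) ∧
  (Finset.univ.filter fun i => s.1 i = (r : ℝ) + 1).card = p - k ∧
  (∀ g, s.2 g = (r : ℝ) ∨ s.2 g = (r : ℝ) + 1) ∧
  (Finset.univ.filter fun g => s.2 g = (r : ℝ) + 1).card = min p k

lemma card_filter_update {n : ℕ} (f : Fin n → ℝ) (i : Fin n) (v c : ℝ)
    (hfi : f i ≠ c) (hv : v = c) :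
    (Finset.univ.filter (fun j => Function.update f i v j = c)).card
      = (Finset.univ.filter (fun j => f j = c)).card + 1 := by
  classical
  have he : Finset.univ.filter (fun j => Function.update f i v j = c)
      = insert i (Finset.univ.filter (fun j => f j = c)) := by
    ext j
    by_cases hj : j = i <;> simp [Function.update_apply, hj, hv, hfi]
  rw [he, Finset.card_insert_of_notMem (by simp [hfi])]

lemma pg_step (m k : ℕ) (hk : 0 < k) (hkm : k ≤ m) (ε : ℝ) (hε : 0 < ε)
    (r p : ℕ) (hp : p < k + m)
    (s s' : (Fin m → ℝ) × (Fin k → ℝ))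
    (hinv : PgInv m k r p s)
    (task : ℝ × ℝ) (htask : task = if p < k then (1 + ε, 1) else (1, ε))
    (hstep :
      (∃ i : Fin m, (∀ i', s.1 i ≤ s.1 i') ∧
        (∀ g, s.1 i + task.1 ≤ s.2 g + task.2) ∧
        s' = (Function.update s.1 i (s.1 i + task.1), s.2)) ∨
      (∃ g : Fin k, (∀ g', s.2 g ≤ s.2 g') ∧
        (∀ i, s.2 g + task.2 ≤ s.1 i + task.1) ∧
        s' = (s.1, Function.update s.2 g (s.2 g + task.2)))) :
    if p + 1 < k + m then PgInv m k r (p + 1) s' else PgInv m k (r + 1) 0 s' := by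
  classical
  obtain ⟨hc1, hc2, hg1, hg2⟩ := hinv
  by_cases hpk : p < k
  · -- big task, forced onto a GPU
    rw [if_pos hpk] at htask
    subst htask
    have hcall : ∀ i, s.1 i = (r : ℝ) := by
      intro i
      rcases hc1 i with h | h
      · exact h
      · exfalso
        have : (Finset.univ.filter fun i => s.1 i = (r : ℝ) + 1).card ≠ 0 := by
          rw [Finset.card_ne_zero]
          exact ⟨i, by simp [h]⟩
        omega
    have hgex : ∃ g, s.2 g = (r : ℝ) := by
      by_contra hcon
      push_neg at hcon
      have : (Finset.univ.filter fun g => s.2 g = (r : ℝ) + 1) = Finset.univ := by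
        apply Finset.eq_univ_of_forall
        intro g
        simp only [Finset.mem_filter, Finset.mem_univ, true_and]
        rcases hg1 g with h | h
        · exact absurd h (hcon g)
        · exact h
      rw [this] at hg2
      simp at hg2
      omega
    obtain ⟨g0, hg0⟩ := hgex
    rcases hstep with ⟨i, _, hle, _⟩ | ⟨g, hmin, _, hs'⟩
    · exfalso
      have := hle g0
      rw [hcall i, hg0] at this
      simp only at this
      linarith
    · have hgr : s.2 g = (r : ℝ) := by
        have h1 := hmin g0
        rw [hg0] at h1
        rcases hg1 g with h | h
        · exact h
        · exfalso; rw [h] at h1; linarith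
      have hs1 : s'.1 = s.1 := by rw [hs']
      have hs2 : s'.2 = Function.update s.2 g (s.2 g + 1) := by rw [hs']
      have hlt : p + 1 < k + m := by omega
      rw [if_pos hlt]
      refine ⟨?_, ?_, ?_, ?_⟩
      · intro i; rw [hs1]; exact hc1 i
      · rw [hs1, hc2]; omega
      · intro g'
        rw [hs2]
        rcases eq_or_ne g' g with h | h
        · right; rw [h, Function.update_self, hgr]
        · rw [Function.update_of_ne h]; exact hg1 g'
      · rw [hs2, card_filter_update s.2 g _ _
          (by rw [hgr]; intro h; norm_num at h) (by rw [hgr]), hg2]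
        omega
  · -- small task, forced onto a CPU
    rw [if_neg hpk] at htask
    subst htask
    have hgall : ∀ g, s.2 g = (r : ℝ) + 1 := by
      have hmin : min p k = k := by omega
      rw [hmin] at hg2
      have huniv : (Finset.univ.filter fun g => s.2 g = (r : ℝ) + 1) = Finset.univ :=
        Finset.eq_univ_of_card _ (by simp [hg2])
      intro g
      have := Finset.eq_univ_iff_forall.mp huniv g
      simpa using this
    have hcex : ∃ i, s.1 i = (r : ℝ) := by
      by_contra hcon
      push_neg at hcon
      have : (Finset.univ.filter fun i => s.1 i = (r : ℝ) + 1) = Finset.univ := by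
        apply Finset.eq_univ_of_forall
        intro i
        simp only [Finset.mem_filter, Finset.mem_univ, true_and]
        rcases hc1 i with h | h
        · exact absurd h (hcon i)
        · exact h
      rw [this] at hc2
      simp at hc2
      omega
    obtain ⟨i0, hi0⟩ := hcex
    rcases hstep with ⟨i, hmin, _, hs'⟩ | ⟨g, _, hle, _⟩
    · have hir : s.1 i = (r : ℝ) := by
        have h1 := hmin i0
        rw [hi0] at h1
        rcases hc1 i with h | h
        · exact h
        · exfalso; rw [h] at h1; linarith
      have hs1 : s'.1 = Function.update s.1 i (s.1 i + 1) := by rw [hs']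
      have hs2 : s'.2 = s.2 := by rw [hs']
      have hcard' : (Finset.univ.filter fun j =>
          (Function.update s.1 i (s.1 i + 1)) j = (r : ℝ) + 1).card = (p - k) + 1 := by
        rw [card_filter_update s.1 i _ _ (by rw [hir]; intro h; norm_num at h)
          (by rw [hir]), hc2]
      have hup : ∀ i', (Function.update s.1 i (s.1 i + 1)) i' = (r : ℝ)
          ∨ (Function.update s.1 i (s.1 i + 1)) i' = (r : ℝ) + 1 := by
        intro i'
        rcases eq_or_ne i' i with h | h
        · right; rw [h, Function.update_self, hir]
        · rw [Function.update_of_ne h]; exact hc1 i'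
      by_cases hlt : p + 1 < k + m
      · rw [if_pos hlt]
        refine ⟨?_, ?_, ?_, ?_⟩
        · intro i'; rw [hs1]; exact hup i'
        · rw [hs1, hcard']; omega
        · intro g'; rw [hs2]; exact hg1 g'
        · rw [hs2, hg2]; omega
      · rw [if_neg hlt]
        have hcnt : (p - k) + 1 = m := by omega
        have hall' : ∀ j, (Function.update s.1 i (s.1 i + 1)) j = (r : ℝ) + 1 := by
          have huniv : (Finset.univ.filter fun j =>
              (Function.update s.1 i (s.1 i + 1)) j = (r : ℝ) + 1) = Finset.univ :=
            Finset.eq_univ_of_card _ (by simp [hcard', hcnt])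
          intro j
          have := Finset.eq_univ_iff_forall.mp huniv j
          simpa using this
        have hz : (0 : ℕ) - k = 0 := by omega
        refine ⟨?_, ?_, ?_, ?_⟩
        · intro i'
          left
          rw [hs1]
          push_cast
          exact hall' i'
        · rw [hs1, hz, Finset.card_eq_zero, Finset.filter_eq_empty_iff]
          intro j _
          rw [hall' j]
          push_cast
          intro h
          norm_num at h
        · intro g'
          left
          rw [hs2]
          push_cast
          exact hgall g'
        · rw [hs2, Nat.min_eq_left (by omega), Finset.card_eq_zero,
            Finset.filter_eq_empty_iff]
          intro j _
          rw [hgall j]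
          push_cast
          intro h
          norm_num at h
    · exfalso
      have := hle i0
      rw [hi0, hgall g] at this
      simp only at this
      linarith

lemma divmod_of (c r p : ℕ) (hp : p < c) :
    (r * c + p) / c = r ∧ (r * c + p) % c = p := by
  have hc : 0 < c := by omega
  constructor
  · rw [mul_comm, Nat.mul_add_div hc, Nat.div_eq_of_lt hp, add_zero]
  · rw [mul_comm, Nat.mul_add_mod, Nat.mod_eq_of_lt hp]

lemma pg_invariant (m k : ℕ) (hk : 0 < k) (hkm : k ≤ m) (ε : ℝ) (hε : 0 < ε)
    (st : Fin (m / k * (k + m) + 1) → (Fin m → ℝ) × (Fin k → ℝ))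
    (hrun : IsPGRun m k (m / k * (k + m)) (pgTasks m k ε) st) :
    ∀ t, ∀ ht : t ≤ m / k * (k + m),
      PgInv m k (t / (k + m)) (t % (k + m)) (st ⟨t, Nat.lt_succ_of_le ht⟩) := by
  have hkm0 : 0 < k + m := by omega
  intro t
  induction t with
  | zero =>
    intro ht
    have h0 : (⟨0, Nat.lt_succ_of_le ht⟩ : Fin (m / k * (k + m) + 1)) = 0 := by
      apply Fin.ext; simp
    rw [h0, hrun.1]
    refine ⟨fun i => Or.inl (by simp), ?_, fun g => Or.inl (by simp), ?_⟩
    · simp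
    · simp
  | succ n ih =>
    intro ht
    have hn : n < m / k * (k + m) := by omega
    have hstep := hrun.2 ⟨n, hn⟩
    have hp : n % (k + m) < k + m := Nat.mod_lt _ hkm0
    have hdm : n / (k + m) * (k + m) + n % (k + m) = n := by
      rw [mul_comm]; exact Nat.div_add_mod n (k + m)
    have hkey := pg_step m k hk hkm ε hε (n / (k + m)) (n % (k + m)) hp
      (st ⟨n, by omega⟩) (st ⟨n + 1, by omega⟩) (ih (by omega))
      (pgTasks m k ε ⟨n, hn⟩) rfl hstep
    by_cases hlt : n % (k + m) + 1 < k + m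
    · rw [if_pos hlt] at hkey
      have hd : (n + 1) / (k + m) = n / (k + m) ∧ (n + 1) % (k + m) = n % (k + m) + 1 := by
        have := divmod_of (k + m) (n / (k + m)) (n % (k + m) + 1) hlt
        rwa [← add_assoc, hdm] at this
      rw [hd.1, hd.2]
      exact hkey
    · rw [if_neg hlt] at hkey
      have he : n + 1 = (n / (k + m) + 1) * (k + m) + 0 := by
        rw [add_zero, add_mul, one_mul]
        omega
      have hd := divmod_of (k + m) (n / (k + m) + 1) 0 hkm0
      rw [← he] at hd
      rw [hd.1, hd.2]
      exact hkey

lemma pg_schedule (m k : ℕ) (hk : 0 < k) (hkm : k ≤ m) (ε : ℝ) (hε : 0 < ε) :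
    ∃ (typ : Fin (m / k * (k + m)) → Bool)
       (mach : Fin (m / k * (k + m)) → ℕ),
      (∀ j, mach j < if typ j then m else k) ∧
      ∀ (b : Bool) (q : ℕ),
        (∑ j ∈ Finset.univ.filter (fun j => typ j = b ∧ mach j = q),
          (if b then (pgTasks m k ε j).1 else (pgTasks m k ε j).2)) ≤
        1 + ((m / k : ℕ) : ℝ) * ε * ((m : ℝ) / k) := by
  classical
  set Q := m / k with hQdef
  have hkm0 : 0 < k + m := by omega
  have hQ1 : 1 ≤ Q := (Nat.one_le_div_iff hk).mpr hkm
  have hQk : Q * k ≤ m := Nat.div_mul_le_self m k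
  have hm0 : 0 < m := by omega
  -- real facts
  have hQR : (1 : ℝ) ≤ (Q : ℝ) := by exact_mod_cast hQ1
  have hmk1 : (1 : ℝ) ≤ (m : ℝ) / k := by
    rw [le_div_iff₀ (by exact_mod_cast hk)]
    simpa using (by exact_mod_cast hkm : (k : ℝ) ≤ m)
  have hQmk : (Q : ℝ) ≤ (m : ℝ) / k := by
    rw [le_div_iff₀ (by exact_mod_cast hk : (0:ℝ) < k)]
    exact_mod_cast hQk
  have h11 : (1 : ℝ) ≤ (Q : ℝ) * ((m : ℝ) / k) := by nlinarith
  have hB1 : (1 : ℝ) + ε ≤ 1 + (Q : ℝ) * ε * ((m : ℝ) / k) := by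
    nlinarith [mul_nonneg hε.le (sub_nonneg.mpr h11)]
  -- decomposition facts for indices
  have hrd : ∀ j : Fin (Q * (k + m)), j.val / (k + m) < Q := fun j =>
    (Nat.div_lt_iff_lt_mul hkm0).mpr j.isLt
  have hpm : ∀ j : Fin (Q * (k + m)), j.val % (k + m) < k + m := fun j =>
    Nat.mod_lt _ hkm0
  have hjv : ∀ j : Fin (Q * (k + m)),
      j.val / (k + m) * (k + m) + j.val % (k + m) = j.val := fun j => by
    rw [mul_comm]; exact Nat.div_add_mod _ _
  by_cases hε1 : ε ≤ 1
  · -- small ε: big tasks one per CPU, small tasks balanced round-robin on GPUs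
    refine ⟨fun j => decide (j.val % (k + m) < k),
      fun j => if j.val % (k + m) < k then j.val / (k + m) * k + j.val % (k + m)
        else (j.val / (k + m) * m + (j.val % (k + m) - k)) % k, ?_, ?_⟩
    · intro j
      by_cases h : j.val % (k + m) < k
      · simp only [h, decide_true, if_true]
        calc j.val / (k + m) * k + j.val % (k + m)
            < (j.val / (k + m) + 1) * k := by rw [add_mul]; omega
          _ ≤ Q * k := Nat.mul_le_mul_right _ (hrd j)
          _ ≤ m := hQk
      · simp only [h, decide_false, if_false]
        exact Nat.mod_lt _ hk
    · intro b q
      cases b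
      · -- GPUs
        set S := Finset.univ.filter (fun j : Fin (Q * (k + m)) =>
          (decide (j.val % (k + m) < k) = false) ∧
          (if j.val % (k + m) < k then j.val / (k + m) * k + j.val % (k + m)
            else (j.val / (k + m) * m + (j.val % (k + m) - k)) % k) = q) with hS
        have hmem : ∀ j ∈ S, ¬ (j.val % (k + m) < k) ∧
            (j.val / (k + m) * m + (j.val % (k + m) - k)) % k = q := by
          intro j hj
          rw [hS, Finset.mem_filter] at hj
          obtain ⟨-, h1, h2⟩ := hj
          simp only [decide_eq_false_iff_not] at h1
          rw [if_neg h1] at h2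
          exact ⟨h1, h2⟩
        have hcard : S.card ≤ Q * m / k + 1 := by
          have step1 : S.card ≤ ((Finset.range (Q * m)).filter (fun n => n % k = q)).card := by
            apply Finset.card_le_card_of_injOn
              (fun j => j.val / (k + m) * m + (j.val % (k + m) - k))
            · intro j hj
              obtain ⟨h1, h2⟩ := hmem j hj
              simp only [Finset.mem_coe, Finset.mem_filter, Finset.mem_range]
              constructor
              · calc j.val / (k + m) * m + (j.val % (k + m) - k)
                    < (j.val / (k + m) + 1) * m := by
                      rw [add_mul]; have := hpm j; omega
                  _ ≤ Q * m := Nat.mul_le_mul_right _ (hrd j)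
              · exact h2
            · intro a ha b hb hab
              obtain ⟨ha1, -⟩ := hmem a ha
              obtain ⟨hb1, -⟩ := hmem b hb
              try simp only at hab
              have := rep_eq (c := m) (by have := hpm a; omega) (by have := hpm b; omega) hab
              apply Fin.ext
              rw [← hjv a, ← hjv b, this.1]
              have := hpm a; have := hpm b
              omega
          have step2 : ((Finset.range (Q * m)).filter (fun n => n % k = q)).card
              ≤ Q * m / k + 1 := by
            rw [← Finset.card_range (Q * m / k + 1)]
            apply Finset.card_le_card_of_injOn (fun n => n / k)
            · intro n hn
              simp only [Finset.mem_coe, Finset.mem_filter, Finset.mem_range] at hn ⊢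
              have : n / k ≤ Q * m / k := Nat.div_le_div_right (le_of_lt hn.1)
              omega
            · intro a ha b hb hab
              have ha' : a < Q * m ∧ a % k = q := by simpa using ha
              have hb' : b < Q * m ∧ b % k = q := by simpa using hb
              try simp only at hab
              have h1 := Nat.div_add_mod a k
              have h2 := Nat.div_add_mod b k
              rw [ha'.2] at h1
              rw [hb'.2] at h2
              rw [← h1, ← h2, hab]
          omega
        have hsum : ∑ j ∈ S, (if false then (pgTasks m k ε j).1
            else (pgTasks m k ε j).2) ≤ ((Q * m / k + 1) : ℕ) * ε := by
          apply sum_le_of _ _ _ (le_of_lt hε) _ _ hcard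
          intro j hj
          obtain ⟨h1, -⟩ := hmem j hj
          simp [pgTasks, h1]
        refine hsum.trans ?_
        have hcast : ((Q * m / k : ℕ) : ℝ) ≤ (Q : ℝ) * ((m : ℝ) / k) := by
          calc ((Q * m / k : ℕ) : ℝ) ≤ ((Q * m : ℕ) : ℝ) / (k : ℝ) := Nat.cast_div_le
            _ = (Q : ℝ) * ((m : ℝ) / k) := by push_cast; ring
        push_cast
        nlinarith
      · -- CPUs: at most one big task each
        set S := Finset.univ.filter (fun j : Fin (Q * (k + m)) =>
          (decide (j.val % (k + m) < k) = true) ∧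
          (if j.val % (k + m) < k then j.val / (k + m) * k + j.val % (k + m)
            else (j.val / (k + m) * m + (j.val % (k + m) - k)) % k) = q) with hS
        have hmem : ∀ j ∈ S, (j.val % (k + m) < k) ∧
            j.val / (k + m) * k + j.val % (k + m) = q := by
          intro j hj
          rw [hS, Finset.mem_filter] at hj
          obtain ⟨-, h1, h2⟩ := hj
          simp only [decide_eq_true_eq] at h1
          rw [if_pos h1] at h2
          exact ⟨h1, h2⟩
        have hcard : S.card ≤ 1 := by
          rw [Finset.card_le_one]
          intro a ha b hb
          obtain ⟨ha1, ha2⟩ := hmem a ha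
          obtain ⟨hb1, hb2⟩ := hmem b hb
          have := rep_eq (c := k) ha1 hb1 (ha2.trans hb2.symm)
          apply Fin.ext
          rw [← hjv a, ← hjv b, this.1, this.2]
        have hsum : ∑ j ∈ S, (if true then (pgTasks m k ε j).1
            else (pgTasks m k ε j).2) ≤ (1 : ℕ) * (1 + ε) := by
          apply sum_le_of _ _ _ (by linarith) _ _ hcard
          intro j hj
          obtain ⟨h1, -⟩ := hmem j hj
          simp [pgTasks, h1]
        refine hsum.trans ?_
        push_cast
        linarith
  · -- large ε: big tasks one per CPU, Q·k small tasks per round on GPUs,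
    -- remaining small tasks on the spare CPUs
    push_neg at hε1
    refine ⟨fun j => decide (j.val % (k + m) < k ∨ Q * k ≤ j.val % (k + m) - k),
      fun j => if j.val % (k + m) < k then j.val / (k + m) * k + j.val % (k + m)
        else if j.val % (k + m) - k < Q * k then (j.val % (k + m) - k) % k
        else j.val % (k + m) - k, ?_, ?_⟩
    · intro j
      by_cases h : j.val % (k + m) < k
      · simp only [h, true_or, decide_true, if_true]
        calc j.val / (k + m) * k + j.val % (k + m)
            < (j.val / (k + m) + 1) * k := by rw [add_mul]; omega
          _ ≤ Q * k := Nat.mul_le_mul_right _ (hrd j)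
          _ ≤ m := hQk
      · by_cases h2 : j.val % (k + m) - k < Q * k
        · have : ¬ (j.val % (k + m) < k ∨ Q * k ≤ j.val % (k + m) - k) := by
            omega
          simp only [this, decide_false, if_neg h, if_pos h2, if_false]
          exact Nat.mod_lt _ hk
        · have : (j.val % (k + m) < k ∨ Q * k ≤ j.val % (k + m) - k) := by omega
          simp only [this, decide_true, if_neg h, if_neg h2, if_true]
          have := hpm j
          omega
    · intro b q
      cases b
      · -- GPUs: Q² tasks of length ε each
        set S := Finset.univ.filter (fun j : Fin (Q * (k + m)) =>
          (decide (j.val % (k + m) < k ∨ Q * k ≤ j.val % (k + m) - k) = false) ∧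
          (if j.val % (k + m) < k then j.val / (k + m) * k + j.val % (k + m)
            else if j.val % (k + m) - k < Q * k then (j.val % (k + m) - k) % k
            else j.val % (k + m) - k) = q) with hS
        have hmem : ∀ j ∈ S, ¬ (j.val % (k + m) < k) ∧ j.val % (k + m) - k < Q * k ∧
            (j.val % (k + m) - k) % k = q := by
          intro j hj
          rw [hS, Finset.mem_filter] at hj
          obtain ⟨-, h1, h2⟩ := hj
          simp only [decide_eq_false_iff_not, not_or, not_le] at h1
          rw [if_neg h1.1, if_pos h1.2] at h2
          exact ⟨h1.1, h1.2, h2⟩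
        have hcard : S.card ≤ Q * Q := by
          rw [← Finset.card_range (Q * Q)]
          apply Finset.card_le_card_of_injOn
            (fun j => j.val / (k + m) * Q + (j.val % (k + m) - k) / k)
          · intro j hj
            obtain ⟨-, h2, -⟩ := hmem j hj
            simp only [Finset.mem_coe, Finset.mem_range]
            have hx : (j.val % (k + m) - k) / k < Q := (Nat.div_lt_iff_lt_mul hk).mpr h2
            calc j.val / (k + m) * Q + (j.val % (k + m) - k) / k
                < (j.val / (k + m) + 1) * Q := by rw [add_mul]; omega
              _ ≤ Q * Q := Nat.mul_le_mul_right _ (hrd j)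
          · intro a ha b hb hab
            obtain ⟨ha1, ha2, ha3⟩ := hmem a ha
            obtain ⟨hb1, hb2, hb3⟩ := hmem b hb
            try simp only at hab
            have hQ0 : 0 < Q := hQ1
            have hdm := rep_eq (c := Q) ((Nat.div_lt_iff_lt_mul hk).mpr ha2)
              ((Nat.div_lt_iff_lt_mul hk).mpr hb2) hab
            have e1 := Nat.div_add_mod (a.val % (k + m) - k) k
            have e2 := Nat.div_add_mod (b.val % (k + m) - k) k
            rw [ha3] at e1
            rw [hb3] at e2
            have hsk : a.val % (k + m) - k = b.val % (k + m) - k := by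
              rw [← e1, ← e2, hdm.2]
            apply Fin.ext
            rw [← hjv a, ← hjv b, hdm.1]
            have := hpm a; have := hpm b
            omega
        have hsum : ∑ j ∈ S, (if false then (pgTasks m k ε j).1
            else (pgTasks m k ε j).2) ≤ ((Q * Q : ℕ) : ℝ) * ε := by
          apply sum_le_of _ _ _ (le_of_lt hε) _ _ hcard
          intro j hj
          obtain ⟨h1, -, -⟩ := hmem j hj
          simp [pgTasks, h1]
        refine hsum.trans ?_
        push_cast
        nlinarith
      · -- CPUs
        set S := Finset.univ.filter (fun j : Fin (Q * (k + m)) =>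
          (decide (j.val % (k + m) < k ∨ Q * k ≤ j.val % (k + m) - k) = true) ∧
          (if j.val % (k + m) < k then j.val / (k + m) * k + j.val % (k + m)
            else if j.val % (k + m) - k < Q * k then (j.val % (k + m) - k) % k
            else j.val % (k + m) - k) = q) with hS
        by_cases hq : q < Q * k
        · -- only big tasks land here
          have hmem : ∀ j ∈ S, (j.val % (k + m) < k) ∧
              j.val / (k + m) * k + j.val % (k + m) = q := by
            intro j hj
            rw [hS, Finset.mem_filter] at hj
            obtain ⟨-, h1, h2⟩ := hj
            simp only [decide_eq_true_eq] at h1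
            rcases h1 with h1 | h1
            · rw [if_pos h1] at h2
              exact ⟨h1, h2⟩
            · exfalso
              have hkk : ¬ (j.val % (k + m) < k) := by
                intro hc
                have : j.val % (k + m) - k = 0 := by omega
                rw [this] at h1
                have : Q * k = 0 := by omega
                have := Nat.mul_eq_zero.mp this
                omega
              rw [if_neg hkk, if_neg (by omega)] at h2
              omega
          have hcard : S.card ≤ 1 := by
            rw [Finset.card_le_one]
            intro a ha b hb
            obtain ⟨ha1, ha2⟩ := hmem a ha
            obtain ⟨hb1, hb2⟩ := hmem b hb
            have := rep_eq (c := k) ha1 hb1 (ha2.trans hb2.symm)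
            apply Fin.ext
            rw [← hjv a, ← hjv b, this.1, this.2]
          have hsum : ∑ j ∈ S, (if true then (pgTasks m k ε j).1
              else (pgTasks m k ε j).2) ≤ (1 : ℕ) * (1 + ε) := by
            apply sum_le_of _ _ _ (by linarith) _ _ hcard
            intro j hj
            obtain ⟨h1, -⟩ := hmem j hj
            simp [pgTasks, h1]
          refine hsum.trans ?_
          push_cast
          linarith
        · -- only leftover small tasks land here, one per round
          have hmem : ∀ j ∈ S, ¬ (j.val % (k + m) < k) ∧
              j.val % (k + m) - k = q := by
            intro j hj
            rw [hS, Finset.mem_filter] at hj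
            obtain ⟨-, h1, h2⟩ := hj
            simp only [decide_eq_true_eq] at h1
            have hbig : ¬ (j.val % (k + m) < k) := by
              intro hc
              rw [if_pos hc] at h2
              have : j.val / (k + m) * k + j.val % (k + m) < Q * k := by
                calc j.val / (k + m) * k + j.val % (k + m)
                    < (j.val / (k + m) + 1) * k := by rw [add_mul]; omega
                  _ ≤ Q * k := Nat.mul_le_mul_right _ (hrd j)
              omega
            have hge : Q * k ≤ j.val % (k + m) - k := by tauto
            rw [if_neg hbig, if_neg (by omega)] at h2
            exact ⟨hbig, h2⟩
          have hcard : S.card ≤ Q := by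
            have hh : S.card ≤ (Finset.range Q).card := by
              apply Finset.card_le_card_of_injOn (fun j => j.val / (k + m))
              · intro j hj
                simp only [Finset.mem_coe, Finset.mem_range]
                exact hrd j
              · intro a ha b hb hab
                obtain ⟨ha1, ha2⟩ := hmem a ha
                obtain ⟨hb1, hb2⟩ := hmem b hb
                try simp only at hab
                apply Fin.ext
                rw [← hjv a, ← hjv b, hab]
                have := hpm a; have := hpm b
                omega
            simpa using hh
          have hsum : ∑ j ∈ S, (if true then (pgTasks m k ε j).1
              else (pgTasks m k ε j).2) ≤ (Q : ℕ) * 1 := by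
            apply sum_le_of _ _ _ (by norm_num) _ _ hcard
            intro j hj
            obtain ⟨h1, -⟩ := hmem j hj
            simp [pgTasks, h1]
          refine hsum.trans ?_
          have hεmk : (1 : ℝ) ≤ ε * ((m : ℝ) / k) := by nlinarith
          have := mul_le_mul_of_nonneg_left hεmk (by positivity : (0:ℝ) ≤ (Q : ℝ))
          push_cast
          nlinarith


/-- the competitive ratio of Post Greedy is at least `⌊m/k⌋`.
On the adversarial sequence, every PG run ends with all loads at most `⌊m/k⌋`
and some GPU load exactly `⌊m/k⌋` (makespan `⌊m/k⌋`), while the swapped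
assignment gives makespan at most `1 + ⌊m/k⌋·ε·(m/k)`, which tends to `1` as
`ε → 0`. -/
theorem post_greedy_lower_bound
    (m k : ℕ) (hk : 0 < k) (hkm : k ≤ m) (ε : ℝ) (hε : 0 < ε) :
    (∀ st : Fin (m / k * (k + m) + 1) → (Fin m → ℝ) × (Fin k → ℝ),
      IsPGRun m k (m / k * (k + m)) (pgTasks m k ε) st →
        (∀ i, (st (Fin.last _)).1 i ≤ ((m / k : ℕ) : ℝ)) ∧
        (∀ g, (st (Fin.last _)).2 g ≤ ((m / k : ℕ) : ℝ)) ∧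
        (∃ g, (st (Fin.last _)).2 g = ((m / k : ℕ) : ℝ))) ∧
    (∃ (typ : Fin (m / k * (k + m)) → Bool)
       (mach : Fin (m / k * (k + m)) → ℕ),
      (∀ j, mach j < if typ j then m else k) ∧
      ∀ (b : Bool) (q : ℕ),
        (∑ j ∈ Finset.univ.filter (fun j => typ j = b ∧ mach j = q),
          (if b then (pgTasks m k ε j).1 else (pgTasks m k ε j).2)) ≤
        1 + ((m / k : ℕ) : ℝ) * ε * ((m : ℝ) / k)) := by
  constructor
  · intro st hrun
    have hkm0 : 0 < k + m := by omega
    have hinv := pg_invariant m k hk hkm ε hε st hrun (m / k * (k + m)) le_rfl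
    have hd : m / k * (k + m) / (k + m) = m / k := Nat.mul_div_cancel _ hkm0
    have hm : m / k * (k + m) % (k + m) = 0 := Nat.mul_mod_left _ _
    rw [hd, hm] at hinv
    have hlast : (⟨m / k * (k + m), Nat.lt_succ_of_le le_rfl⟩ :
        Fin (m / k * (k + m) + 1)) = Fin.last _ := rfl
    rw [hlast] at hinv
    obtain ⟨hc1, hc2, hg1, hg2⟩ := hinv
    have hcall : ∀ i, (st (Fin.last _)).1 i = ((m / k : ℕ) : ℝ) := by
      intro i
      rcases hc1 i with h | h
      · exact h
      · exfalso
        have : (Finset.univ.filter fun i =>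
            (st (Fin.last _)).1 i = ((m / k : ℕ) : ℝ) + 1).card ≠ 0 :=
          Finset.card_ne_zero.mpr ⟨i, by simp [h]⟩
        omega
    have hgall : ∀ g, (st (Fin.last _)).2 g = ((m / k : ℕ) : ℝ) := by
      intro g
      rcases hg1 g with h | h
      · exact h
      · exfalso
        have : (Finset.univ.filter fun g =>
            (st (Fin.last _)).2 g = ((m / k : ℕ) : ℝ) + 1).card ≠ 0 :=
          Finset.card_ne_zero.mpr ⟨g, by simp [h]⟩
        omega
    exact ⟨fun i => le_of_eq (hcall i), fun g => le_of_eq (hgall g),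
      ⟨⟨0, hk⟩, hgall _⟩⟩
  · exact pg_schedule m k hk hkm ε hε
end
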